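/- Let H be a Hopf *-algebra and A a *-algebra with a left H-*-action. Then the set GL(H,A) of linear maps â: H → A satisfying â(1_H) = 1_A, â(gh) = â(g₍₁₎)(g₍₂₎ ▷ â(h)), and (g₍₁₎ ▷ b)â(g₍₂₎) = â(g₍₁₎)(g₍₂₎ ▷ b) for all g,h ∈ H and b ∈ A, is a group under the convolution product (â * b̂)(g) = â(g₍₁₎)b̂(g₍₂₎), with unit ê(g) = ε(g)1_A. -/

import Mathlib

variable {C : Type*} [CommRing C] [StarRing C]
variable {H : Type*} [Ring H] [HopfAlgebra C H] [StarRing H] [StarModule C H]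
variable {A : Type*} [Ring A] [StarRing A] [Algebra C A] [StarModule C A]

open TensorProduct in
/-- `SwRep g g1 g2` states that `Δ(g) = ∑ i, g1 i ⊗ g2 i`, i.e. `(g1, g2)` is a Sweedler
representation of the comultiplication of `g`. -/
def SwRep {C : Type*} [CommRing C] {H : Type*} [Ring H] [HopfAlgebra C H]
    (g : H) {n : ℕ} (g1 g2 : Fin n → H) : Prop :=
  Coalgebra.comul (R := C) g = ∑ i, g1 i ⊗ₜ[C] g2 i

/-- `H` is a Hopf `*`-algebra: comultiplication and counit are `*`-homomorphisms. -/
def IsHopfStar (C H : Type*) [CommRing C] [StarRing C] [Ring H] [HopfAlgebra C H]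
    [StarRing H] [StarModule C H] : Prop :=
  (∀ g : H, Coalgebra.counit (R := C) (star g) = star (Coalgebra.counit (R := C) g)) ∧
  (∀ (g : H) (n : ℕ) (g1 g2 : Fin n → H), SwRep (C := C) g g1 g2 →
      SwRep (C := C) (star g) (fun i => star (g1 i)) (fun i => star (g2 i)))

/-- A left `*`-action of the Hopf `*`-algebra `H` on the `*`-algebra `A`:
`g ▷ (ab) = (g₍₁₎ ▷ a)(g₍₂₎ ▷ b)`, `g ▷ 1 = ε(g)1`, `(g ▷ a)* = S(g)* ▷ a*`. -/
structure StarAction (C H A : Type*) [CommRing C] [StarRing C] [Ring H] [HopfAlgebra C H]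
    [StarRing H] [StarModule C H] [Ring A] [StarRing A] [Algebra C A] [StarModule C A] where
  act : H →ₗ[C] A →ₗ[C] A
  act_one : ∀ a : A, act 1 a = a
  act_mul : ∀ (g h : H) (a : A), act (g * h) a = act g (act h a)
  act_ab : ∀ (g : H) (a b : A) (n : ℕ) (g1 g2 : Fin n → H), SwRep (C := C) g g1 g2 →
      act g (a * b) = ∑ i, act (g1 i) a * act (g2 i) b
  act_unit : ∀ g : H, act g 1 = Coalgebra.counit (R := C) g • (1 : A)
  act_star : ∀ (g : H) (a : A), star (act g a) =
      act (star (HopfAlgebra.antipode (R := C) g)) (star a)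

/-- The convolution product on `Hom_C(H,A)`: `(f * h)(g) = f(g₍₁₎)h(g₍₂₎)`. -/
noncomputable def conv (f h : H →ₗ[C] A) : H →ₗ[C] A :=
  (TensorProduct.lift ((LinearMap.mul C A).compl₁₂ f h)).comp (Coalgebra.comul)

/-- The convolution unit `ê(g) = ε(g)1_A`. -/
noncomputable def convUnit : H →ₗ[C] A := (Algebra.linearMap C A).comp (Coalgebra.counit)

/-- The set `GL(H,A)` of cocycles: `â(1)=1`, `â(gh) = â(g₍₁₎)(g₍₂₎ ▷ â(h))`, and
`(g₍₁₎ ▷ b)â(g₍₂₎) = â(g₍₁₎)(g₍₂₎ ▷ b)`. -/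
def GLset (α : StarAction C H A) : Set (H →ₗ[C] A) :=
  {f | f 1 = 1 ∧
    (∀ (g h : H) (n : ℕ) (g1 g2 : Fin n → H), SwRep (C := C) g g1 g2 →
        f (g * h) = ∑ i, f (g1 i) * α.act (g2 i) (f h)) ∧
    (∀ (g : H) (b : A) (n : ℕ) (g1 g2 : Fin n → H), SwRep (C := C) g g1 g2 →
        ∑ i, α.act (g1 i) b * f (g2 i) = ∑ i, f (g1 i) * α.act (g2 i) b)}

/-!
Work in the convolution algebra `Hom(H, A)` and write `β b = (g ↦ g ▷ b)`, an algebra map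
`A → Hom(H, A)`. The third condition says that `â` commutes with every `β b`; the second says that
`k ↦ â(· k)` equals `k ↦ â * β (â k)` in the convolution algebra `Hom(H, Hom(H, A))`, where
`â ↦ â(· k)` and `β ∘ ·` are multiplicative. Closure under products and inverses is then plain
monoid algebra (for inverses, once they exist), the commutation condition being what lets the
factors be reordered.

For invertibility, the cocycle condition makes `ρ(g) = â(g₍₁₎)(g₍₂₎ ▷ ·)` an algebra map
`H → End A`, hence convolution-invertible with inverse `ρ ∘ S`; so is the action itself. Hence
`g ↦ â(g)·` (left multiplication) equals `ρ * act⁻¹` and is invertible in `Hom(H, End A)`. Its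
inverse still commutes with all right multiplications, so it is again a left multiplication, by
the convolution inverse of `â`.
-/

open Coalgebra TensorProduct WithConv

lemma Coalgebra.Repr.sum_counit_right_smul {R D ι : Type*} [CommSemiring R] [AddCommMonoid D]
    [Module R D] [Coalgebra R D] {d : D} (𝓡 : Repr R d ι) :
    ∑ i ∈ 𝓡.index, counit (R := R) (𝓡.right i) • 𝓡.left i = d := by
  simpa only [map_sum, _root_.TensorProduct.rid_tmul, one_smul] using
    congr(_root_.TensorProduct.rid R D $(sum_tmul_counit_eq 𝓡))

namespace LinearMap

section Convolution

variable {R D B B' : Type*} [CommSemiring R] [AddCommMonoid D] [Module R D] [Coalgebra R D]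
  [Semiring B] [Algebra R B] [Semiring B'] [Algebra R B']

def postcompConv (φ : B →ₐ[R] B') : WithConv (D →ₗ[R] B) →* WithConv (D →ₗ[R] B') where
  toFun x := toConv (φ.toLinearMap ∘ₗ x.ofConv)
  map_one' := by ext; simp
  map_mul' x y := by
    ext1
    exact algHom_comp_convMul_distrib φ x y

@[simp] lemma postcompConv_apply (φ : B →ₐ[R] B') (x : WithConv (D →ₗ[R] B)) (d : D) :
    postcompConv φ x d = φ (x d) := rfl

def counitSmul : B →* WithConv (D →ₗ[R] B) where
  toFun b := toConv ((counit : D →ₗ[R] R).smulRight b)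
  map_one' := by ext; simp [Algebra.algebraMap_eq_smul_one]
  map_mul' b b' := by
    ext d
    rw [(ℛ R d).convMul_apply]
    simp_rw [smulRight_apply, smul_mul_smul_comm, ← Finset.sum_smul, ← smul_eq_mul,
      ← map_smul, ← map_sum, sum_counit_smul]

@[simp] lemma counitSmul_apply (b : B) (d : D) :
    counitSmul (R := R) b d = counit (R := R) d • b := rfl

lemma counitSmul_mul_apply (b : B) (x : WithConv (D →ₗ[R] B)) (d : D) :
    (counitSmul b * x : WithConv (D →ₗ[R] B)) d = b * x d := by
  rw [(ℛ R d).convMul_apply]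
  simp_rw [counitSmul_apply, smul_mul_assoc, ← mul_smul_comm, ← Finset.mul_sum, ← map_smul,
    ← map_sum, sum_counit_smul]

lemma mul_counitSmul_apply (x : WithConv (D →ₗ[R] B)) (b : B) (d : D) :
    (x * counitSmul b : WithConv (D →ₗ[R] B)) d = x d * b := by
  rw [(ℛ R d).convMul_apply]
  simp_rw [counitSmul_apply, mul_smul_comm, ← smul_mul_assoc, ← Finset.sum_mul, ← map_smul,
    ← map_sum, (ℛ R d).sum_counit_right_smul]

lemma postcompConv_lmul_injective :
    Function.Injective (postcompConv (D := D) (Algebra.lmul R B)) := by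
  intro x y h
  ext d
  simpa using congr($h d 1)

lemma commute_counitSmul_postcompConv {φ : B →ₐ[R] B'} {y : B'} (hy : ∀ b, Commute (φ b) y)
    (z : WithConv (D →ₗ[R] B)) : Commute (counitSmul y) (postcompConv φ z) := by
  ext1
  ext d
  rw [counitSmul_mul_apply, mul_counitSmul_apply]
  exact (hy _).eq.symm

lemma eq_postcompConv_lmul_of_commute (u : WithConv (D →ₗ[R] Module.End R B))
    (hu : ∀ b, Commute u (counitSmul (mulRight R b))) :
    u = postcompConv (Algebra.lmul R B) (toConv (applyₗ 1 ∘ₗ u.ofConv)) := by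
  ext d b
  have h := congr($((hu b).eq) d 1)
  rw [mul_counitSmul_apply, counitSmul_mul_apply] at h
  simpa using h

lemma isUnit_of_isUnit_postcompConv_lmul {x : WithConv (D →ₗ[R] B)}
    (hx : IsUnit (postcompConv (Algebra.lmul R B) x)) : IsUnit x := by
  obtain ⟨u, hu⟩ := hx
  have hcomm (b : B) :
      Commute (↑u⁻¹ : WithConv (D →ₗ[R] Module.End R B)) (counitSmul (mulRight R b)) := by
    apply Commute.units_inv_left
    rw [hu]
    exact (commute_counitSmul_postcompConv (fun a => commute_mulLeft_right a b) x).symm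
  have hy := eq_postcompConv_lmul_of_commute _ hcomm
  refine isUnit_iff_exists.2
    ⟨toConv (applyₗ 1 ∘ₗ (↑u⁻¹ : WithConv (D →ₗ[R] Module.End R B)).ofConv),
      postcompConv_lmul_injective ?_, postcompConv_lmul_injective ?_⟩
  · rw [map_mul, ← hy, ← hu, Units.mul_inv, map_one]
  · rw [map_mul, ← hy, ← hu, Units.inv_mul, map_one]

end Convolution

section Bialgebra

variable {R D B : Type*} [CommSemiring R] [Semiring D] [Semiring B] [Algebra R B]

lemma convMul_apply_one [Bialgebra R D] (x y : WithConv (D →ₗ[R] B)) : (x * y) 1 = x 1 * y 1 := by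
  simp [Bialgebra.comul_one, Algebra.TensorProduct.one_def]

lemma isUnit_toConv_algHom [HopfAlgebra R D] (φ : D →ₐ[R] B) : IsUnit (toConv φ.toLinearMap) := by
  have hid : IsUnit (toConv (id : D →ₗ[R] D)) :=
    isUnit_iff_exists.2 ⟨_, id_mul_antipode, antipode_mul_id⟩
  simpa [postcompConv] using hid.map (postcompConv φ)

def mulRightConv [Bialgebra R D] :
    WithConv (D →ₗ[R] B) →* WithConv (D →ₗ[R] WithConv (D →ₗ[R] B)) where
  toFun x := toConv ((WithConv.linearEquiv R _).symm.toLinearMap ∘ₗ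
    ((mul R D).compr₂ x.ofConv).flip)
  map_one' := by
    ext k g
    simp [Bialgebra.counit_mul, Algebra.smul_def, ← map_mul, mul_comm]
  map_mul' x y := by
    ext k g
    change (x * y) (g * k) = _
    rw [((ℛ R g).mul (ℛ R k)).convMul_apply, (ℛ R k).convMul_apply, ofConv_sum,
      sum_apply, Coalgebra.Repr.mul_index, Finset.sum_product, Finset.sum_comm]
    refine Finset.sum_congr rfl fun j _ => ?_
    rw [(ℛ R g).convMul_apply]
    rfl

@[simp] lemma mulRightConv_apply [Bialgebra R D] (x : WithConv (D →ₗ[R] B)) (k g : D) :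
    mulRightConv x k g = x (g * k) := rfl

end Bialgebra

end LinearMap

open LinearMap

section SweedlerRepresentation

variable {R D B : Type*} [CommRing R] [Ring D] [HopfAlgebra R D] [Ring B] [Algebra R B]

lemma exists_swRep (g : D) : ∃ (n : ℕ) (g1 g2 : Fin n → D), SwRep (C := R) g g1 g2 :=
  TensorProduct.exists_sum_tmul_eq _

lemma SwRep.convMul_apply {g : D} {n : ℕ} {g1 g2 : Fin n → D} (hg : SwRep (C := R) g g1 g2)
    (x y : WithConv (D →ₗ[R] B)) : (x * y) g = ∑ i, x (g1 i) * y (g2 i) :=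
  (⟨Finset.univ, g1, g2, hg.symm⟩ : Repr R g (Fin n)).convMul_apply x y

lemma conv_eq_ofConv_mul (f h : D →ₗ[R] B) : conv f h = (toConv f * toConv h).ofConv := by
  rw [conv, LinearMap.convMul_def, ofConv_toConv, ← LinearMap.comp_assoc]
  congr 1
  exact TensorProduct.ext' fun _ _ => rfl

lemma convUnit_eq_ofConv_one : (convUnit : D →ₗ[R] B) = (1 : WithConv (D →ₗ[R] B)).ofConv := rfl

end SweedlerRepresentation

namespace StarAction

variable (α : StarAction C H A)

def actAlgHom : H →ₐ[C] Module.End C A :=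
  AlgHom.ofLinearMap α.act (LinearMap.ext α.act_one) fun g h => LinearMap.ext (α.act_mul g h)

noncomputable def orbit : A →ₐ[C] WithConv (H →ₗ[C] A) :=
  AlgHom.ofLinearMap ((WithConv.linearEquiv C _).symm.toLinearMap ∘ₗ α.act.flip)
    (by ext g; simp [α.act_unit, Algebra.algebraMap_eq_smul_one])
    fun a b => by
      ext g
      obtain ⟨n, g1, g2, hg⟩ := exists_swRep (R := C) g
      rw [hg.convMul_apply]
      exact α.act_ab g a b n g1 g2 hg

@[simp] lemma orbit_apply (b : A) (g : H) : α.orbit b g = α.act g b := rfl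

lemma mulRightConv_orbit (b : A) : mulRightConv (α.orbit b) = postcompConv α.orbit (α.orbit b) := by
  ext k g
  simp [α.act_mul]

/-- The cocycle condition `x (g k) = x g₍₁₎ * (g₍₂₎ ▷ x k)`, read in `Hom(H, Hom(H, A))` as an
identity between functions of `k`. -/
def cocycles : Submonoid (WithConv (H →ₗ[C] A)) where
  carrier := {x | x 1 = 1 ∧ mulRightConv x = counitSmul x * postcompConv α.orbit x ∧
    ∀ b, Commute (α.orbit b) x}
  one_mem' := ⟨by simp, by rw [map_one, map_one, map_one, one_mul], fun _ => Commute.one_right _⟩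
  mul_mem' {x y} hx hy := by
    refine ⟨by rw [convMul_apply_one, hx.1, hy.1, one_mul], ?_,
      fun b => (hx.2.2 b).mul_right (hy.2.2 b)⟩
    rw [map_mul, hx.2.1, hy.2.1, (commute_counitSmul_postcompConv hy.2.2 x).symm.mul_mul_mul_comm,
      ← map_mul, ← map_mul]

/-- `g ↦ x g₍₁₎ * (g₍₂₎ ▷ ·)`: the action on `A` of `x g₍₁₎ # g₍₂₎` in the smash product `A # H`. -/
noncomputable def twistedAct (x : WithConv (H →ₗ[C] A)) : WithConv (H →ₗ[C] Module.End C A) :=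
  postcompConv (Algebra.lmul C A) x * toConv α.actAlgHom.toLinearMap

lemma twistedAct_apply (x : WithConv (H →ₗ[C] A)) (g : H) (b : A) :
    α.twistedAct x g b = (x * α.orbit b) g := by
  rw [twistedAct, (ℛ C g).convMul_apply, (ℛ C g).convMul_apply, LinearMap.sum_apply]
  rfl

variable {α}

lemma twistedAct_mul {x : WithConv (H →ₗ[C] A)} (hx : x ∈ α.cocycles) (g k : H) :
    α.twistedAct x (g * k) = α.twistedAct x g * α.twistedAct x k := by
  ext b
  calc α.twistedAct x (g * k) b = mulRightConv (x * α.orbit b) k g := α.twistedAct_apply x _ b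
    _ = (counitSmul x * postcompConv α.orbit (x * α.orbit b) :
        WithConv (H →ₗ[C] WithConv (H →ₗ[C] A))) k g := by
      rw [map_mul, hx.2.1, mulRightConv_orbit, mul_assoc, ← map_mul]
    _ = α.twistedAct x g (α.twistedAct x k b) := by
      rw [counitSmul_mul_apply, twistedAct_apply, twistedAct_apply]
      rfl

lemma twistedAct_one {x : WithConv (H →ₗ[C] A)} (hx : x ∈ α.cocycles) : α.twistedAct x 1 = 1 := by
  ext b
  rw [twistedAct_apply, convMul_apply_one, hx.1, one_mul, orbit_apply, α.act_one]
  rfl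

lemma isUnit_of_mem_cocycles {x : WithConv (H →ₗ[C] A)} (hx : x ∈ α.cocycles) : IsUnit x := by
  apply isUnit_of_isUnit_postcompConv_lmul
  obtain ⟨u, hu⟩ := isUnit_toConv_algHom α.actAlgHom
  rw [← Units.isUnit_mul_units _ u, hu]
  exact isUnit_toConv_algHom
    (AlgHom.ofLinearMap (α.twistedAct x).ofConv (twistedAct_one hx) (twistedAct_mul hx))

lemma mem_cocycles_of_mul_eq_one {x y : WithConv (H →ₗ[C] A)} (hx : x ∈ α.cocycles)
    (hxy : x * y = 1) (hyx : y * x = 1) : y ∈ α.cocycles := by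
  have hcomm (b : A) : Commute (α.orbit b) y :=
    (hx.2.2 b).units_inv_right (u := ⟨x, y, hxy, hyx⟩)
  refine ⟨?_, ?_, hcomm⟩
  · have h := congr($hxy 1)
    rw [convMul_apply_one, hx.1, one_mul] at h
    simpa using h
  · have hinv : mulRightConv x * (postcompConv α.orbit y * counitSmul y) = 1 := by
      rw [hx.2.1, mul_assoc, ← mul_assoc (postcompConv α.orbit x), ← map_mul, hxy, map_one,
        one_mul, ← map_mul, hxy, map_one]
    rw [left_inv_eq_right_inv (b := mulRightConv y) (by rw [← map_mul, hyx, map_one]) hinv,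
      (commute_counitSmul_postcompConv hcomm y).eq]

end StarAction

lemma mem_GLset_iff (α : StarAction C H A) (x : WithConv (H →ₗ[C] A)) :
    x.ofConv ∈ GLset α ↔ x ∈ α.cocycles := by
  constructor
  · rintro ⟨h1, hcocycle, hcomm⟩
    refine ⟨h1, ?_, fun b => ?_⟩
    · ext k g
      obtain ⟨n, g1, g2, hg⟩ := exists_swRep (R := C) g
      rw [counitSmul_mul_apply, hg.convMul_apply]
      exact hcocycle g k n g1 g2 hg
    · ext g
      obtain ⟨n, g1, g2, hg⟩ := exists_swRep (R := C) g
      rw [hg.convMul_apply, hg.convMul_apply]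
      exact hcomm g b n g1 g2 hg
  · rintro ⟨h1, hcocycle, hcomm⟩
    refine ⟨h1, fun g k n g1 g2 hg => ?_, fun g b n g1 g2 hg => ?_⟩
    · have h := congr($hcocycle k g)
      rwa [counitSmul_mul_apply, hg.convMul_apply] at h
    · have h := congr($((hcomm b).eq) g)
      rwa [hg.convMul_apply, hg.convMul_apply] at h

theorem GL_group_general (α : StarAction C H A) :
    convUnit ∈ GLset α ∧
    (∀ f ∈ GLset α, ∀ h ∈ GLset α, conv f h ∈ GLset α) ∧
    (∀ f h k : H →ₗ[C] A, conv (conv f h) k = conv f (conv h k)) ∧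
    (∀ f ∈ GLset α, conv convUnit f = f ∧ conv f convUnit = f) ∧
    (∀ f ∈ GLset α, ∃ h ∈ GLset α, conv f h = convUnit ∧ conv h f = convUnit) := by
  simp only [conv_eq_ofConv_mul, convUnit_eq_ofConv_one]
  refine ⟨(mem_GLset_iff α 1).2 (one_mem _), fun f hf h hh => ?_, fun f h k => by simp [mul_assoc],
    fun f _ => by simp, fun f hf => ?_⟩
  · exact (mem_GLset_iff α _).2
      (mul_mem ((mem_GLset_iff α (toConv f)).1 hf) ((mem_GLset_iff α (toConv h)).1 hh))
  · have hx := (mem_GLset_iff α (toConv f)).1 hf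
    obtain ⟨⟨_, y, hxy, hyx⟩, rfl⟩ := StarAction.isUnit_of_mem_cocycles hx
    exact ⟨y.ofConv, (mem_GLset_iff α y).2 (StarAction.mem_cocycles_of_mul_eq_one hx hxy hyx),
      by simp [hxy], by simp [hyx]⟩

/-- `GL(H,A)` is a group under the convolution product, with unit `ê(g) = ε(g)1_A`. -/
theorem GL_group (hH : IsHopfStar C H) (α : StarAction C H A) :
    convUnit ∈ GLset α ∧
    (∀ f ∈ GLset α, ∀ h ∈ GLset α, conv f h ∈ GLset α) ∧
    (∀ f h k : H →ₗ[C] A, conv (conv f h) k = conv f (conv h k)) ∧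
    (∀ f ∈ GLset α, conv convUnit f = f ∧ conv f convUnit = f) ∧
    (∀ f ∈ GLset α, ∃ h ∈ GLset α, conv f h = convUnit ∧ conv h f = convUnit) :=
  GL_group_general α
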